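/- Let f : ℝ → ℝ be a convex function and let A, B be n×n Hermitian complex matrices. Then for every j ≥ 1 with 2j−1 ≤ n, λ_{2j-1}(f((A+B)/2)) ≤ λ_j((f(A)+f(B))/2), where λ_j(·) denotes the j-th largest eigenvalue counted with multiplicity. -/

import Mathlib

open Matrix

/-- The `j`-th largest eigenvalue of a Hermitian matrix (`0`-indexed, so `eigDesc hA ⟨0, _⟩`
is the largest), counted with multiplicity. -/
noncomputable def eigDesc {n : ℕ} {A : Matrix (Fin n) (Fin n) ℂ} (hA : A.IsHermitian)
    (j : Fin n) : ℝ :=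
  hA.eigenvalues (Tuple.sort hA.eigenvalues j.rev)

/-- Applying a real function to a Hermitian matrix via the functional calculus yields a
Hermitian matrix. -/
lemma isHermitian_cfc {n : ℕ} {A : Matrix (Fin n) (Fin n) ℂ} (hA : A.IsHermitian)
    (f : ℝ → ℝ) : (hA.cfc f).IsHermitian := by
  rw [← hA.cfc_eq]
  exact cfc_predicate f A

lemma isHermitian_half_smul {n : ℕ} {X : Matrix (Fin n) (Fin n) ℂ} (hX : X.IsHermitian) :
    ((2 : ℝ)⁻¹ • X).IsHermitian := by
  show _ = _
  rw [Matrix.conjTranspose_smul, star_trivial, hX.eq]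

lemma isHermitian_sum_conj {m n : ℕ} {A : Fin m → Matrix (Fin n) (Fin n) ℂ}
    (Z : Fin m → Matrix (Fin n) (Fin n) ℂ) (hA : ∀ i, (A i).IsHermitian) :
    (∑ i, (Z i)ᴴ * A i * Z i).IsHermitian := by
  show _ = _
  rw [Matrix.conjTranspose_sum]
  exact Finset.sum_congr rfl fun i _ => (isHermitian_conjTranspose_mul_mul (Z i) (hA i)).eq

/-!
Write `C = (A + B) / 2`, `D = (f A + f B) / 2` and `μ = λ_j(D)`. On the span `M` of the
eigenvectors of `D` for `λ_j(D), …, λ_n(D)`, a space of dimension `n - j + 1`, Peierls'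
inequality and the convexity of `f` give `f ⟪x, C x⟫ ≤ ⟪x, D x⟫ ≤ μ` for unit vectors `x`.
Counting dimensions, `M` contains unit vectors `x₋, x₊` with `⟪x₋, C x₋⟫ ≤ λ_{n-j+1}(C)` and
`λ_j(C) ≤ ⟪x₊, C x₊⟫`. So `f ≤ μ` at the ends of an interval containing the `n - 2j + 2`
eigenvalues `λ_j(C), …, λ_{n-j+1}(C)`, hence, by convexity, at each of them, and the min-max
principle gives `λ_{2j-1}(f C) ≤ μ`.
-/

open Module

section

variable {𝕜 : Type*} [RCLike 𝕜]

section QuadForm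

variable {ι : Type*} [Fintype ι]

noncomputable def quadForm (X : Matrix ι ι 𝕜) (x : EuclideanSpace 𝕜 ι) : ℝ :=
  RCLike.re (star ⇑x ⬝ᵥ X *ᵥ ⇑x)

lemma quadForm_add (X Y : Matrix ι ι 𝕜) (x : EuclideanSpace 𝕜 ι) :
    quadForm (X + Y) x = quadForm X x + quadForm Y x := by
  simp [quadForm, add_mulVec, dotProduct_add]

lemma quadForm_smul (c : ℝ) (X : Matrix ι ι 𝕜) (x : EuclideanSpace 𝕜 ι) :
    quadForm (c • X) x = c * quadForm X x := by
  simp [quadForm, smul_mulVec, dotProduct_smul, RCLike.real_smul_eq_coe_mul]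

variable {X : Matrix ι ι 𝕜} {u : OrthonormalBasis ι 𝕜 (EuclideanSpace 𝕜 ι)} {ν : ι → ℝ}

lemma inner_toLp_mulVec (hX : X.IsHermitian) (hXu : ∀ i, X *ᵥ ⇑(u i) = ν i • ⇑(u i))
    (x : EuclideanSpace 𝕜 ι) (i : ι) :
    inner 𝕜 (u i) (WithLp.toLp 2 (X *ᵥ ⇑x)) = ν i * inner 𝕜 (u i) x := by
  simp only [EuclideanSpace.inner_eq_star_dotProduct]
  rw [dotProduct_comm, dotProduct_mulVec, ← hX.eq, ← star_mulVec, hXu, star_smul]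
  simp [dotProduct_comm, RCLike.real_smul_eq_coe_mul]

theorem quadForm_eq_sum (hX : X.IsHermitian) (hXu : ∀ i, X *ᵥ ⇑(u i) = ν i • ⇑(u i))
    (x : EuclideanSpace 𝕜 ι) : quadForm X x = ∑ i, ν i * ‖inner 𝕜 (u i) x‖ ^ 2 := by
  have h : star ⇑x ⬝ᵥ X *ᵥ ⇑x = inner 𝕜 x (WithLp.toLp 2 (X *ᵥ ⇑x)) := dotProduct_comm _ _
  rw [quadForm, h, ← u.sum_inner_mul_inner, map_sum]
  refine Finset.sum_congr rfl fun i _ => ?_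
  rw [inner_toLp_mulVec hX hXu, ← inner_conj_symm, mul_left_comm, RCLike.conj_mul]
  norm_cast

lemma inner_eq_zero_of_mem_span_image {s : Set ι} {x : EuclideanSpace 𝕜 ι}
    (hx : x ∈ Submodule.span 𝕜 (u '' s)) {i : ι} (hi : i ∉ s) : inner 𝕜 (u i) x = 0 := by
  rw [← u.coe_toBasis, u.toBasis.mem_span_image] at hx
  rw [← u.repr_apply_apply, ← u.coe_toBasis_repr_apply]
  exact Finsupp.notMem_support_iff.mp fun h => hi (hx h)

lemma finrank_span_image (s : Finset ι) :
    finrank 𝕜 (Submodule.span 𝕜 (u '' s)) = s.card := by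
  have hli := u.orthonormal.linearIndependent.comp _ (Subtype.val_injective (p := (· ∈ s)))
  have := finrank_span_eq_card hli
  rwa [Set.range_comp, Subtype.range_coe_subtype, Fintype.card_coe] at this

lemma quadForm_le_of_mem_span (hX : X.IsHermitian) (hXu : ∀ i, X *ᵥ ⇑(u i) = ν i • ⇑(u i))
    {s : Set ι} {μ : ℝ} (hμ : ∀ i ∈ s, ν i ≤ μ) {x : EuclideanSpace 𝕜 ι}
    (hx : x ∈ Submodule.span 𝕜 (u '' s)) : quadForm X x ≤ μ * ‖x‖ ^ 2 := by
  rw [quadForm_eq_sum hX hXu, ← u.sum_sq_norm_inner_right, Finset.mul_sum]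
  refine Finset.sum_le_sum fun i _ => ?_
  by_cases hi : i ∈ s
  · exact mul_le_mul_of_nonneg_right (hμ i hi) (by positivity)
  · simp [inner_eq_zero_of_mem_span_image hx hi]

lemma le_quadForm_of_mem_span (hX : X.IsHermitian) (hXu : ∀ i, X *ᵥ ⇑(u i) = ν i • ⇑(u i))
    {s : Set ι} {μ : ℝ} (hμ : ∀ i ∈ s, μ ≤ ν i) {x : EuclideanSpace 𝕜 ι}
    (hx : x ∈ Submodule.span 𝕜 (u '' s)) : μ * ‖x‖ ^ 2 ≤ quadForm X x := by
  rw [quadForm_eq_sum hX hXu, ← u.sum_sq_norm_inner_right, Finset.mul_sum]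
  refine Finset.sum_le_sum fun i _ => ?_
  by_cases hi : i ∈ s
  · exact mul_le_mul_of_nonneg_right (hμ i hi) (by positivity)
  · simp [inner_eq_zero_of_mem_span_image hx hi]

/-- Peierls' inequality. -/
theorem ConvexOn.map_quadForm_le {f : ℝ → ℝ} (hf : ConvexOn ℝ Set.univ f) {Y : Matrix ι ι 𝕜}
    (hX : X.IsHermitian) (hY : Y.IsHermitian) (hXu : ∀ i, X *ᵥ ⇑(u i) = ν i • ⇑(u i))
    (hYu : ∀ i, Y *ᵥ ⇑(u i) = f (ν i) • ⇑(u i)) {x : EuclideanSpace 𝕜 ι} (hx : ‖x‖ = 1) :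
    f (quadForm X x) ≤ quadForm Y x := by
  rw [quadForm_eq_sum hX hXu, quadForm_eq_sum hY hYu]
  have hw : ∑ i, ‖inner 𝕜 (u i) x‖ ^ 2 = 1 := by rw [u.sum_sq_norm_inner_right, hx, one_pow]
  simpa only [smul_eq_mul, mul_comm] using
    hf.map_sum_le (fun i _ => by positivity) hw fun i _ => Set.mem_univ (ν i)

end QuadForm

lemma Submodule.exists_norm_eq_one_mem_inf {E : Type*} [NormedAddCommGroup E] [NormedSpace 𝕜 E]
    [FiniteDimensional 𝕜 E] {V W : Submodule 𝕜 E} (h : finrank 𝕜 E < finrank 𝕜 V + finrank 𝕜 W) :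
    ∃ x ∈ V, x ∈ W ∧ ‖x‖ = 1 := by
  obtain ⟨x, hxV, hxW, hx⟩ : ∃ x ∈ V, x ∈ W ∧ x ≠ 0 := by
    by_contra! hVW
    exact h.not_ge (Submodule.finrank_add_finrank_le_of_disjoint (Submodule.disjoint_def.mpr hVW))
  exact ⟨(‖x‖⁻¹ : 𝕜) • x, V.smul_mem _ hxV, W.smul_mem _ hxW, norm_smul_inv_norm hx⟩

namespace Matrix.IsHermitian

section

variable {ι : Type*} [Fintype ι] [DecidableEq ι] {X : Matrix ι ι 𝕜}

lemma cfc_mulVec_eigenvectorBasis (hX : X.IsHermitian) (f : ℝ → ℝ) (i : ι) :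
    hX.cfc f *ᵥ ⇑(hX.eigenvectorBasis i) = f (hX.eigenvalues i) • ⇑(hX.eigenvectorBasis i) := by
  rw [IsHermitian.cfc, Unitary.conjStarAlgAut_apply, ← mulVec_mulVec, ← mulVec_mulVec,
    hX.star_eigenvectorUnitary_mulVec, diagonal_mulVec_single, Function.comp_apply,
    Function.comp_apply, ← smul_eq_mul, Pi.single_smul', mulVec_smul,
    hX.eigenvectorUnitary_mulVec, RCLike.real_smul_eq_coe_smul (K := 𝕜)]

lemma cfc_isHermitian (hX : X.IsHermitian) (f : ℝ → ℝ) : (hX.cfc f).IsHermitian := by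
  rw [← hX.cfc_eq]
  exact cfc_predicate f X

end

variable {n : ℕ} {X : Matrix (Fin n) (Fin n) 𝕜} (hX : X.IsHermitian)

/-- The eigenvalues in increasing order. -/
noncomputable def sortedEigenvalues : Fin n → ℝ :=
  hX.eigenvalues ∘ Tuple.sort hX.eigenvalues

noncomputable def sortedEigenvectorBasis :
    OrthonormalBasis (Fin n) 𝕜 (EuclideanSpace 𝕜 (Fin n)) :=
  hX.eigenvectorBasis.reindex (Tuple.sort hX.eigenvalues).symm

lemma monotone_sortedEigenvalues : Monotone hX.sortedEigenvalues :=
  Tuple.monotone_sort _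

lemma mulVec_sortedEigenvectorBasis (p : Fin n) :
    X *ᵥ ⇑(hX.sortedEigenvectorBasis p) =
      hX.sortedEigenvalues p • ⇑(hX.sortedEigenvectorBasis p) := by
  simpa [sortedEigenvectorBasis, sortedEigenvalues] using hX.mulVec_eigenvectorBasis _

lemma cfc_mulVec_sortedEigenvectorBasis (f : ℝ → ℝ) (p : Fin n) :
    hX.cfc f *ᵥ ⇑(hX.sortedEigenvectorBasis p) =
      f (hX.sortedEigenvalues p) • ⇑(hX.sortedEigenvectorBasis p) := by
  simpa [sortedEigenvectorBasis, sortedEigenvalues] using hX.cfc_mulVec_eigenvectorBasis f _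

lemma quadForm_le_of_mem_span_Iic {p : Fin n} {x : EuclideanSpace 𝕜 (Fin n)}
    (hx : x ∈ Submodule.span 𝕜 (hX.sortedEigenvectorBasis '' ↑(Finset.Iic p))) :
    quadForm X x ≤ hX.sortedEigenvalues p * ‖x‖ ^ 2 :=
  quadForm_le_of_mem_span hX hX.mulVec_sortedEigenvectorBasis
    (fun _ hq => hX.monotone_sortedEigenvalues (by simpa using hq)) hx

lemma le_quadForm_of_mem_span_Ici {p : Fin n} {x : EuclideanSpace 𝕜 (Fin n)}
    (hx : x ∈ Submodule.span 𝕜 (hX.sortedEigenvectorBasis '' ↑(Finset.Ici p))) :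
    hX.sortedEigenvalues p * ‖x‖ ^ 2 ≤ quadForm X x :=
  le_quadForm_of_mem_span hX hX.mulVec_sortedEigenvectorBasis
    (fun _ hq => hX.monotone_sortedEigenvalues (by simpa using hq)) hx

lemma exists_quadForm_le_sortedEigenvalues {p : Fin n}
    {W : Submodule 𝕜 (EuclideanSpace 𝕜 (Fin n))} (hW : n ≤ finrank 𝕜 W + p) :
    ∃ x ∈ W, ‖x‖ = 1 ∧ quadForm X x ≤ hX.sortedEigenvalues p := by
  obtain ⟨x, hxV, hxW, hx⟩ := Submodule.exists_norm_eq_one_mem_inf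
    (V := Submodule.span 𝕜 (hX.sortedEigenvectorBasis '' ↑(Finset.Iic p))) (W := W)
    (by rw [finrank_euclideanSpace_fin, finrank_span_image, Fin.card_Iic]; omega)
  exact ⟨x, hxW, hx, by simpa [hx] using hX.quadForm_le_of_mem_span_Iic hxV⟩

lemma exists_sortedEigenvalues_le_quadForm {p : Fin n}
    {W : Submodule 𝕜 (EuclideanSpace 𝕜 (Fin n))} (hW : p < finrank 𝕜 W) :
    ∃ x ∈ W, ‖x‖ = 1 ∧ hX.sortedEigenvalues p ≤ quadForm X x := by
  obtain ⟨x, hxV, hxW, hx⟩ := Submodule.exists_norm_eq_one_mem_inf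
    (V := Submodule.span 𝕜 (hX.sortedEigenvectorBasis '' ↑(Finset.Ici p))) (W := W)
    (by rw [finrank_euclideanSpace_fin, finrank_span_image, Fin.card_Ici]; omega)
  exact ⟨x, hxW, hx, by simpa [hx] using hX.le_quadForm_of_mem_span_Ici hxV⟩

lemma sortedEigenvalues_le_of_forall_quadForm_le {p : Fin n}
    {W : Submodule 𝕜 (EuclideanSpace 𝕜 (Fin n))} (hW : p < finrank 𝕜 W) {μ : ℝ}
    (hWμ : ∀ x ∈ W, quadForm X x ≤ μ * ‖x‖ ^ 2) : hX.sortedEigenvalues p ≤ μ := by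
  obtain ⟨x, hxW, hx, hpx⟩ := hX.exists_sortedEigenvalues_le_quadForm hW
  simpa [hx] using hpx.trans (hWμ x hxW)

theorem sortedEigenvalues_cfc_le {f : ℝ → ℝ} (hf : ConvexOn ℝ Set.univ f) {a b μ : ℝ}
    (ha : f a ≤ μ) (hb : f b ≤ μ) {p q r : Fin n} (hap : a ≤ hX.sortedEigenvalues p)
    (hqb : hX.sortedEigenvalues q ≤ b) (hr : (r : ℕ) + p ≤ q) :
    (hX.cfc_isHermitian f).sortedEigenvalues r ≤ μ := by
  refine sortedEigenvalues_le_of_forall_quadForm_le _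
    (W := Submodule.span 𝕜 (hX.sortedEigenvectorBasis '' ↑(Finset.Icc p q)))
    (by rw [finrank_span_image, Fin.card_Icc]; omega) fun x hx => ?_
  refine quadForm_le_of_mem_span (hX.cfc_isHermitian f) (hX.cfc_mulVec_sortedEigenvectorBasis f)
    (fun i hi => ?_) hx
  obtain ⟨hpi, hiq⟩ := Finset.mem_Icc.mp (Finset.mem_coe.mp hi)
  have hab : hX.sortedEigenvalues i ∈ segment ℝ a b := by
    rw [segment_eq_uIcc]
    exact Set.Icc_subset_uIcc ⟨hap.trans (hX.monotone_sortedEigenvalues hpi),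
      (hX.monotone_sortedEigenvalues hiq).trans hqb⟩
  exact (hf.le_on_segment (Set.mem_univ a) (Set.mem_univ b) hab).trans (max_le ha hb)

end Matrix.IsHermitian

theorem ConvexOn.map_quadForm_midpoint_le {ι : Type*} [Fintype ι] [DecidableEq ι] {f : ℝ → ℝ}
    (hf : ConvexOn ℝ Set.univ f) {A B : Matrix ι ι 𝕜} (hA : A.IsHermitian) (hB : B.IsHermitian)
    {x : EuclideanSpace 𝕜 ι} (hx : ‖x‖ = 1) :
    f (quadForm ((2 : ℝ)⁻¹ • (A + B)) x) ≤ quadForm ((2 : ℝ)⁻¹ • (hA.cfc f + hB.cfc f)) x := by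
  have hfA := hf.map_quadForm_le hA (hA.cfc_isHermitian f) hA.mulVec_eigenvectorBasis
    (hA.cfc_mulVec_eigenvectorBasis f) hx
  have hfB := hf.map_quadForm_le hB (hB.cfc_isHermitian f) hB.mulVec_eigenvectorBasis
    (hB.cfc_mulVec_eigenvectorBasis f) hx
  have hmid := hf.2 (Set.mem_univ (quadForm A x)) (Set.mem_univ (quadForm B x))
    (by norm_num : (0 : ℝ) ≤ 2⁻¹) (by norm_num : (0 : ℝ) ≤ 2⁻¹) (by norm_num)
  simp only [smul_eq_mul] at hmid
  simp only [quadForm_smul, quadForm_add, mul_add]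
  linarith

end

lemma eigDesc_eq_sortedEigenvalues {n : ℕ} {A : Matrix (Fin n) (Fin n) ℂ} (hA : A.IsHermitian)
    (k : Fin n) : eigDesc hA k = hA.sortedEigenvalues k.rev :=
  rfl

theorem eig_cfc_mean_le
    {n : ℕ} (f : ℝ → ℝ) (hf : ConvexOn ℝ Set.univ f)
    (A B : Matrix (Fin n) (Fin n) ℂ) (hA : A.IsHermitian) (hB : B.IsHermitian)
    (j : ℕ) (hj : 1 ≤ j) (hjn : 2 * j - 1 ≤ n) :
    eigDesc (isHermitian_cfc (isHermitian_half_smul (hA.add hB)) f)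
        ⟨2 * j - 1 - 1, by omega⟩ ≤
      eigDesc (isHermitian_half_smul ((isHermitian_cfc hA f).add (isHermitian_cfc hB f)))
        ⟨j - 1, by omega⟩ := by
  set hC := isHermitian_half_smul (hA.add hB)
  set hD := isHermitian_half_smul ((isHermitian_cfc hA f).add (isHermitian_cfc hB f))
  set p : Fin n := ⟨j - 1, by omega⟩
  have hp : (p : ℕ) = j - 1 := rfl
  set M := Submodule.span ℂ (hD.sortedEigenvectorBasis '' ↑(Finset.Iic p.rev))
  have hM : finrank ℂ M = n - j + 1 := by
    rw [finrank_span_image, Fin.card_Iic, Fin.val_rev, hp]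
    omega
  have hfM : ∀ x ∈ M, ‖x‖ = 1 →
      f (quadForm ((2 : ℝ)⁻¹ • (A + B)) x) ≤ hD.sortedEigenvalues p.rev :=
    fun x hxM hx => (hf.map_quadForm_midpoint_le hA hB hx).trans
      (by simpa [hx] using hD.quadForm_le_of_mem_span_Iic hxM)
  obtain ⟨xa, hxaM, hxa, ha⟩ := hC.exists_quadForm_le_sortedEigenvalues (p := p) (W := M)
    (by rw [hM, hp]; omega)
  obtain ⟨xb, hxbM, hxb, hb⟩ := hC.exists_sortedEigenvalues_le_quadForm (p := p.rev) (W := M)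
    (by rw [hM, Fin.val_rev, hp]; omega)
  rw [eigDesc_eq_sortedEigenvalues, eigDesc_eq_sortedEigenvalues]
  exact hC.sortedEigenvalues_cfc_le hf (hfM xa hxaM hxa) (hfM xb hxbM hxb) ha hb
    (by simp only [Fin.val_rev, hp]; omega)
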